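/- arXiv:1111.3847 — 4 statements merged into one kernel-verified Lean document; each statement's English description precedes it below -/
import Mathlib

section
/- Let q₀, …, q_k be real quadratic forms on ℝ^{n+1}, let p be a positive definite quadratic form on ℝ^{n+1}, and fix j ∈ ℕ. Then Ω^{j+1} = ⋃_{ε>0} Ω_{n−j}(ε), i.e. a point ω ∈ S^k satisfies i⁺(ωq) ≥ j+1 if and only if there exists ε̄ > 0 such that i⁻(ωq − εp) ≤ n − j for all 0 < ε < ε̄. -/
open CategoryTheory

/-- The quotient topology on a real projective space `ℙ(V)`. -/
instance (V : Type*) [AddCommGroup V] [Module ℝ V] [TopologicalSpace V] :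
    TopologicalSpace (Projectivization ℝ V) :=
  inferInstanceAs (TopologicalSpace (Quotient (projectivizationSetoid ℝ V)))

/-- The `i`-th singular homology of a topological space `X` with coefficients in the
commutative ring `R`. -/
noncomputable def singularHomology (R : Type) [CommRing R]
    (X : Type) [TopologicalSpace X] (i : ℕ) : ModuleCat R :=
  ((AlgebraicTopology.alternatingFaceMapComplex (ModuleCat R)).obj
      (((SimplicialObject.whiskering _ _).obj (ModuleCat.free R)).obj
        (TopCat.toSSet.obj (TopCat.of X)))).homology i

/-- The total Betti number of `X` with `ℤ/2` coefficients. -/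
noncomputable def totalBetti (X : Type) [TopologicalSpace X] : Cardinal :=
  Cardinal.sum fun i : ℕ => Module.rank (ZMod 2) (singularHomology (ZMod 2) X i)

/-- The unit sphere `S^k ⊂ ℝ^{k+1}`. -/
def unitSphere (k : ℕ) : Set (Fin (k + 1) → ℝ) := {ω | ∑ i, ω i ^ 2 = 1}

/-- The positive inertia index of a real quadratic form: the maximal dimension of a
subspace on which it is positive definite. -/
noncomputable def posInertia {n : ℕ} (q : QuadraticForm ℝ (Fin n → ℝ)) : ℕ :=
  sSup {d : ℕ | ∃ W : Submodule ℝ (Fin n → ℝ),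
    Module.finrank ℝ W = d ∧ ∀ x ∈ W, x ≠ 0 → 0 < q x}

/-- The negative inertia index of a real quadratic form. -/
noncomputable def negInertia {n : ℕ} (q : QuadraticForm ℝ (Fin n → ℝ)) : ℕ := posInertia (-q)

/-!
If `Q = ωq` is positive definite on a subspace `W` with `dim W = i⁺(Q)`, then by compactness of the
unit sphere of `W` so is `Q - εp` for all small `ε`, whence `i⁺(Q - εp) ≥ i⁺(Q)`; together with
`i⁺ + i⁻ ≤ n + 1` this gives `i⁻(Q - εp) ≤ n - j` when `i⁺(Q) ≥ j + 1`. Conversely, the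
`Q`-orthogonal complement of such a maximal `W` has dimension at least `n + 1 - i⁺(Q)` and `Q ≤ 0`
on it (a positive vector there would enlarge `W`), so `Q - εp` is negative definite on it for
every `ε > 0`, i.e. `i⁺(Q) + i⁻(Q - εp) ≥ n + 1`.
-/

open Filter Topology Metric Module

namespace QuadraticMap

variable {M : Type*} [AddCommGroup M] [Module ℝ M]

theorem posDef_comp_subtype_iff {Q : QuadraticForm ℝ M} {W : Submodule ℝ M} :
    (Q.comp W.subtype).PosDef ↔ ∀ x ∈ W, x ≠ 0 → 0 < Q x :=
  ⟨fun h x hx hx0 => h ⟨x, hx⟩ (by simpa using hx0),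
    fun h x hx0 => h x x.2 (by simpa using hx0)⟩

theorem PosDef.sup_span_singleton {Q : QuadraticForm ℝ M} {W : Submodule ℝ M}
    (hW : (Q.comp W.subtype).PosDef) {x : M} (hx : 0 < Q x)
    (hxW : x ∈ LinearMap.BilinForm.orthogonal (polarBilin Q) W) :
    (Q.comp (W ⊔ Submodule.span ℝ {x}).subtype).PosDef := by
  rw [posDef_comp_subtype_iff] at hW ⊢
  intro y hy hy0
  obtain ⟨w, hw, _, hz, rfl⟩ := Submodule.mem_sup.mp hy
  obtain ⟨t, rfl⟩ := Submodule.mem_span_singleton.mp hz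
  have hpolar : polar Q w x = 0 := hxW w hw
  have hsplit : Q (w + t • x) = Q w + t * t * Q x := by
    have := polar_smul_right (Q := Q) t w x
    rw [polar, hpolar, QuadraticMap.map_smul] at this
    simp only [smul_eq_mul, mul_zero] at this
    linarith
  rw [hsplit]
  rcases eq_or_ne t 0 with rfl | ht
  · simpa using hW w hw (by simpa using hy0)
  · have hw0 : 0 ≤ Q w := by
      rcases eq_or_ne w 0 with rfl | hw0
      · simp
      · exact (hW w hw hw0).le
    exact add_pos_of_nonneg_of_pos hw0 (mul_pos (mul_self_pos.mpr ht) hx)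

variable {E : Type*} [NormedAddCommGroup E] [NormedSpace ℝ E]

theorem continuous_of_finiteDimensional [FiniteDimensional ℝ E] (Q : QuadraticForm ℝ E) :
    Continuous Q := by
  let B : E →ₗ[ℝ] E →L[ℝ] ℝ := LinearMap.toContinuousLinearMap.toLinearMap ∘ₗ associated Q
  have hB : ∀ x, Q x = B x x := fun x => (associated_eq_self_apply ℝ Q x).symm
  rw [show ⇑Q = fun x => B x x from funext hB]
  exact B.continuous_of_finiteDimensional.clm_apply continuous_id

theorem posDef_of_forall_mem_sphere {Q : QuadraticForm ℝ E}
    (hQ : ∀ u ∈ sphere (0 : E) 1, 0 < Q u) : Q.PosDef := by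
  intro x hx
  have hu : ‖x‖⁻¹ • x ∈ sphere (0 : E) 1 := by
    rw [mem_sphere_zero_iff_norm, norm_smul, norm_inv, norm_norm,
      inv_mul_cancel₀ (norm_ne_zero_iff.mpr hx)]
  have := hQ _ hu
  rw [QuadraticMap.map_smul, smul_eq_mul] at this
  exact pos_of_mul_pos_right this (by positivity)

theorem PosDef.eventually_posDef_sub_smul [FiniteDimensional ℝ E] {Q : QuadraticForm ℝ E}
    (hQ : Q.PosDef) (p : QuadraticForm ℝ E) : ∀ᶠ ε in 𝓝 (0 : ℝ), (Q - ε • p).PosDef := by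
  have hcont : Continuous fun z : ℝ × E => Q z.2 - z.1 * p z.2 :=
    ((Q.continuous_of_finiteDimensional).comp continuous_snd).sub
      (continuous_fst.mul ((p.continuous_of_finiteDimensional).comp continuous_snd))
  have hsphere : ∀ᶠ ε in 𝓝 (0 : ℝ), ∀ u ∈ sphere (0 : E) 1, 0 < Q u - ε * p u :=
    (isCompact_sphere 0 1).eventually_forall_of_forall_eventually fun u hu =>
      (hcont.tendsto (0, u)).eventually_const_lt (by
        simpa using hQ u (ne_zero_of_mem_sphere one_ne_zero ⟨u, hu⟩))
  exact hsphere.mono fun ε h => posDef_of_forall_mem_sphere h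

end QuadraticMap

open QuadraticMap

section Inertia

variable {m : ℕ} (Q : QuadraticForm ℝ (Fin m → ℝ))

theorem bddAbove_finrank_posDef_subspaces :
    BddAbove {d : ℕ | ∃ W : Submodule ℝ (Fin m → ℝ),
      finrank ℝ W = d ∧ ∀ x ∈ W, x ≠ 0 → 0 < Q x} := by
  refine ⟨m, ?_⟩
  rintro _ ⟨W, rfl, -⟩
  simpa using W.finrank_le

variable {Q}

theorem finrank_le_posInertia {W : Submodule ℝ (Fin m → ℝ)} (hW : (Q.comp W.subtype).PosDef) :
    finrank ℝ W ≤ posInertia Q :=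
  le_csSup (bddAbove_finrank_posDef_subspaces Q) ⟨W, rfl, posDef_comp_subtype_iff.mp hW⟩

variable (Q)

theorem exists_posDef_finrank_eq_posInertia :
    ∃ W : Submodule ℝ (Fin m → ℝ), finrank ℝ W = posInertia Q ∧ (Q.comp W.subtype).PosDef := by
  obtain ⟨W, hW, hpos⟩ := Nat.sSup_mem (by exact ⟨0, ⊥, finrank_bot ℝ _, by simp⟩)
    (bddAbove_finrank_posDef_subspaces Q)
  exact ⟨W, hW, posDef_comp_subtype_iff.mpr hpos⟩

theorem posInertia_add_negInertia_le : posInertia Q + negInertia Q ≤ m := by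
  obtain ⟨W₁, h₁, hW₁⟩ := exists_posDef_finrank_eq_posInertia Q
  obtain ⟨W₂, h₂, hW₂⟩ := exists_posDef_finrank_eq_posInertia (-Q)
  have hdisj : W₁ ⊓ W₂ = ⊥ := by
    rw [Submodule.eq_bot_iff]
    rintro x ⟨hx₁, hx₂⟩
    by_contra hx
    have h₁ := posDef_comp_subtype_iff.mp hW₁ x hx₁ hx
    have h₂ := posDef_comp_subtype_iff.mp hW₂ x hx₂ hx
    rw [neg_apply] at h₂
    linarith
  have hsum := Submodule.finrank_sup_add_finrank_inf_eq W₁ W₂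
  rw [hdisj, finrank_bot] at hsum
  have hle := (W₁ ⊔ W₂).finrank_le
  rw [finrank_fin_fun] at hle
  unfold negInertia
  omega

theorem exists_nonpos_subspace_posInertia_add_finrank :
    ∃ V : Submodule ℝ (Fin m → ℝ), m ≤ posInertia Q + finrank ℝ V ∧ ∀ x ∈ V, Q x ≤ 0 := by
  obtain ⟨W, hWr, hW⟩ := exists_posDef_finrank_eq_posInertia Q
  refine ⟨LinearMap.BilinForm.orthogonal (polarBilin Q) W, ?_, fun x hx => ?_⟩
  · have := LinearMap.BilinForm.finrank_add_finrank_orthogonal' (B := polarBilin Q) W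
    rw [finrank_fin_fun] at this
    omega
  by_contra! hQx
  have hxW : x ∉ W := fun hxW => by
    have h := hx x hxW
    rw [polarBilin_apply_apply, polar_self, two_nsmul] at h
    linarith
  have := finrank_le_posInertia (hW.sup_span_singleton hQx hx)
  rw [Submodule.finrank_sup_span_singleton hxW] at this
  omega

variable (p : QuadraticForm ℝ (Fin m → ℝ))

theorem eventually_posInertia_le_posInertia_sub_smul :
    ∀ᶠ ε in 𝓝 (0 : ℝ), posInertia Q ≤ posInertia (Q - ε • p) := by
  obtain ⟨W, hWr, hW⟩ := exists_posDef_finrank_eq_posInertia Q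
  filter_upwards [hW.eventually_posDef_sub_smul (p.comp W.subtype)] with ε hε
  exact hWr ▸ finrank_le_posInertia hε

variable {p}

theorem le_posInertia_add_negInertia_sub_smul (hp : p.PosDef) {ε : ℝ} (hε : 0 < ε) :
    m ≤ posInertia Q + negInertia (Q - ε • p) := by
  obtain ⟨V, hV, hQV⟩ := exists_nonpos_subspace_posInertia_add_finrank Q
  have hneg : finrank ℝ V ≤ negInertia (Q - ε • p) := by
    refine finrank_le_posInertia fun x hx => ?_
    have hpx : 0 < p x := hp x (by simpa using hx)
    have hQx : Q x ≤ 0 := hQV x x.2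
    simp only [QuadraticMap.comp_apply, Submodule.subtype_apply, neg_apply, sub_apply, smul_apply,
      smul_eq_mul]
    linarith [mul_pos hε hpx]
  omega

end Inertia

/-- `Ω^{j+1} = ⋃_{ε>0} Ω_{n−j}(ε)`: a point `ω ∈ S^k` satisfies `i⁺(ωq) ≥ j+1` if and only
if there is `ε̄ > 0` such that `i⁻(ωq − εp) ≤ n − j` (read in `ℤ`) for all `0 < ε < ε̄`. -/
theorem omega_union_characterization (n k j : ℕ)
    (q : Fin (k + 1) → QuadraticForm ℝ (Fin (n + 1) → ℝ))
    (p : QuadraticForm ℝ (Fin (n + 1) → ℝ)) (hp : ∀ x, x ≠ 0 → 0 < p x) :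
    ∀ ω ∈ unitSphere k,
      (j + 1 ≤ posInertia (∑ i, ω i • q i) ↔
        ∃ ε₀ > (0 : ℝ), ∀ ε : ℝ, 0 < ε → ε < ε₀ →
          (negInertia (∑ i, ω i • q i - ε • p) : ℤ) ≤ (n : ℤ) - (j : ℤ)) := by
  intro ω _
  set Q := ∑ i, ω i • q i
  constructor
  · intro hj
    obtain ⟨ε₀, hε₀, hε⟩ :=
      Metric.eventually_nhds_iff.mp (eventually_posInertia_le_posInertia_sub_smul Q p)
    refine ⟨ε₀, hε₀, fun ε hε0 hεlt => ?_⟩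
    have h₁ := hε (show dist ε 0 < ε₀ by rwa [Real.dist_0_eq_abs, abs_of_pos hε0])
    have h₂ := posInertia_add_negInertia_le (Q - ε • p)
    omega
  · rintro ⟨ε₀, hε₀, hε⟩
    have h₁ := hε (ε₀ / 2) (half_pos hε₀) (half_lt_self hε₀)
    have h₂ := le_posInertia_add_negInertia_sub_smul Q hp (half_pos hε₀)
    omega
end

section
/- Let q be a real quadratic form on ℝ^{n+1} and p a positive definite quadratic form on ℝ^{n+1}. Then for all sufficiently small ε > 0, i⁻(q − εp) = i⁻(q) + dim ker(q), where ker(q) is the kernel of the symmetric bilinear form associated to q. -/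
open Module Submodule QuadraticMap
open LinearMap (ker)

theorem IsCompact.exists_pos_mul_le {X : Type*} [TopologicalSpace X] {S : Set X}
    (hS : IsCompact S) {f g : X → ℝ} (hf : ContinuousOn f S) (hg : ContinuousOn g S)
    (hfS : ∀ x ∈ S, 0 < f x) : ∃ c > 0, ∀ x ∈ S, c * g x ≤ f x := by
  obtain ⟨m, hm, hmf⟩ := hS.exists_forall_le' hf hfS
  obtain ⟨M, hM⟩ := hS.bddAbove_image hg
  have hc : 0 < m / (|M| + 1) := by positivity
  refine ⟨m / (|M| + 1), hc, fun x hx => ?_⟩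
  calc m / (|M| + 1) * g x ≤ m / (|M| + 1) * (|M| + 1) :=
        mul_le_mul_of_nonneg_left ((hM ⟨x, hx, rfl⟩).trans ((le_abs_self M).trans (by simp)))
          hc.le
    _ = m := div_mul_cancel₀ m (by positivity)
    _ ≤ f x := hmf x hx

namespace QuadraticForm

section Kernel

variable {E : Type*} [AddCommGroup E] [Module ℝ E] (q : QuadraticForm ℝ E)

theorem apply_add_of_mem_ker (a : E) {b : E} (hb : b ∈ ker (associated q)) :
    q (a + b) = q a := by
  have hb' : associated q b = 0 := hb
  have hab : associated q a b = 0 :=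
    (associated_isSymm ℝ q).eq_iff.2 (by rw [hb', LinearMap.zero_apply])
  rw [← associated_eq_self_apply ℝ q (a + b), ← associated_eq_self_apply ℝ q a]
  simp [hb', hab]

theorem nonneg_of_mem_sup_ker {V : Submodule ℝ E} (hV : ∀ x ∈ V, x ≠ 0 → 0 < q x) {x : E}
    (hx : x ∈ V ⊔ ker (associated q)) : 0 ≤ q x := by
  obtain ⟨a, ha, b, hb, rfl⟩ := mem_sup.1 hx
  rw [q.apply_add_of_mem_ker a hb]
  rcases eq_or_ne a 0 with rfl | ha0
  · simp
  · exact (hV a ha ha0).le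

theorem disjoint_of_pos_of_nonpos {W U : Submodule ℝ E} (hW : ∀ x ∈ W, x ≠ 0 → 0 < q x)
    (hU : ∀ x ∈ U, q x ≤ 0) : Disjoint W U := by
  rw [disjoint_def]
  intro x hxW hxU
  by_contra hx
  exact (hW x hxW hx).not_ge (hU x hxU)

theorem finrank_sup_ker [FiniteDimensional ℝ E] {V : Submodule ℝ E}
    (hV : ∀ x ∈ V, x ≠ 0 → q x ≠ 0) :
    finrank ℝ ↥(V ⊔ ker (associated q))
      = finrank ℝ V + finrank ℝ (ker (associated q)) := by
  have hdisj : Disjoint V (ker (associated q)) := by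
    rw [disjoint_def]
    intro x hxV hxK
    by_contra hx
    exact hV x hxV hx (by simpa using q.apply_add_of_mem_ker 0 hxK)
  rw [← finrank_sup_add_finrank_inf_eq, hdisj.eq_bot, finrank_bot, add_zero]

end Kernel

section Orthogonal

variable {E : Type*} [AddCommGroup E] [Module ℝ E] (q : QuadraticForm ℝ E)
  {ι : Type*} (v : Basis ι ℝ E)

theorem apply_eq_sum_of_isOrthoᵢ [Fintype ι] (hv : (associated q).IsOrthoᵢ v) (x : E) :
    q x = ∑ i, q (v i) * (v.repr x i * v.repr x i) := by
  conv_lhs => rw [← v.sum_repr x]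
  rw [← basisRepr_apply, basisRepr_eq_of_iIsOrtho q v hv, weightedSumSquares_apply]
  rfl

theorem pos_of_mem_span_image [Fintype ι] (hv : (associated q).IsOrthoᵢ v) {s : Set ι}
    (hs : ∀ i ∈ s, 0 < q (v i)) {x : E} (hx : x ∈ span ℝ (v '' s)) (hx0 : x ≠ 0) :
    0 < q x := by
  have hsupp : ∀ i ∉ s, v.repr x i = 0 := fun i hi =>
    Finsupp.notMem_support_iff.1 fun h => hi (v.mem_span_image.1 hx h)
  obtain ⟨j, hj⟩ : ∃ j, v.repr x j ≠ 0 :=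
    not_forall.1 fun h => hx0 (v.repr.map_eq_zero_iff.1 (Finsupp.ext h))
  have hjs : j ∈ s := by_contra fun h => hj (hsupp j h)
  rw [q.apply_eq_sum_of_isOrthoᵢ v hv]
  refine Finset.sum_pos' (fun i _ => ?_) ⟨j, Finset.mem_univ j, ?_⟩
  · by_cases hi : i ∈ s
    · exact mul_nonneg (hs i hi).le (mul_self_nonneg _)
    · simp [hsupp i hi]
  · exact mul_pos (hs j hjs) (mul_self_pos.2 hj)

theorem mem_ker_associated_of_isOrthoᵢ (hv : (associated q).IsOrthoᵢ v) {i : ι}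
    (hi : q (v i) = 0) : v i ∈ ker (associated q) := by
  refine v.ext fun j => ?_
  rcases eq_or_ne i j with rfl | hij
  · rw [associated_eq_self_apply, hi, LinearMap.zero_apply]
  · exact hv hij

end Orthogonal

theorem exists_finrank_add_finrank_add_finrank_ker {E : Type*} [AddCommGroup E] [Module ℝ E]
    [FiniteDimensional ℝ E] (q : QuadraticForm ℝ E) :
    ∃ Vp Vn : Submodule ℝ E, (∀ x ∈ Vp, x ≠ 0 → 0 < q x) ∧ (∀ x ∈ Vn, x ≠ 0 → q x < 0) ∧
      finrank ℝ Vp + finrank ℝ Vn + finrank ℝ (ker (associated q))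
        = finrank ℝ E := by
  obtain ⟨v, hv⟩ := LinearMap.BilinForm.exists_orthogonal_basis (associated_isSymm ℝ q)
  have hv' : (associated (-q)).IsOrthoᵢ v := fun i j hij => by
    simpa using hv hij
  set Vp := span ℝ (v '' {i | 0 < q (v i)})
  set Vn := span ℝ (v '' {i | q (v i) < 0})
  set V0 := span ℝ (v '' {i | q (v i) = 0})
  have hVp : ∀ x ∈ Vp, x ≠ 0 → 0 < q x := fun _ =>
    q.pos_of_mem_span_image v hv fun i hi => hi
  have hVn : ∀ x ∈ Vn, x ≠ 0 → 0 < (-q) x := fun _ =>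
    (-q).pos_of_mem_span_image v hv' fun i (hi : q (v i) < 0) => neg_pos.2 hi
  refine ⟨Vp, Vn, hVp, fun x hx hx0 => neg_pos.1 (hVn x hx hx0), le_antisymm ?_ ?_⟩
  · have hdisj : Disjoint Vn (Vp ⊔ ker (associated q)) :=
      (-q).disjoint_of_pos_of_nonpos hVn fun _ hx => by simpa using q.nonneg_of_mem_sup_ker hVp hx
    have := finrank_add_finrank_le_of_disjoint hdisj
    rw [q.finrank_sup_ker fun x hx hx0 => (hVp x hx hx0).ne'] at this
    omega
  · have hV0 : V0 ≤ ker (associated q) := span_le.2 <| by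
      rintro _ ⟨i, hi, rfl⟩
      exact q.mem_ker_associated_of_isOrthoᵢ v hv hi
    have htop : ⊤ ≤ Vp ⊔ Vn ⊔ V0 := by
      rw [← v.span_eq, span_le]
      rintro _ ⟨i, rfl⟩
      rcases lt_trichotomy (q (v i)) 0 with h | h | h
      · exact mem_sup_left (mem_sup_right (subset_span ⟨i, h, rfl⟩))
      · exact mem_sup_right (subset_span ⟨i, h, rfl⟩)
      · exact mem_sup_left (mem_sup_left (subset_span ⟨i, h, rfl⟩))
    calc finrank ℝ E = finrank ℝ (⊤ : Submodule ℝ E) := (finrank_top ℝ E).symm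
      _ ≤ finrank ℝ ↥(Vp ⊔ Vn ⊔ V0) := finrank_mono htop
      _ ≤ finrank ℝ Vp + finrank ℝ Vn + finrank ℝ V0 :=
        (finrank_add_le_finrank_add_finrank _ _).trans
          (Nat.add_le_add_right (finrank_add_le_finrank_add_finrank _ _) _)
      _ ≤ finrank ℝ Vp + finrank ℝ Vn + finrank ℝ (ker (associated q)) :=
        Nat.add_le_add_left (finrank_mono hV0) _

section Normed

variable {E : Type*} [NormedAddCommGroup E] [NormedSpace ℝ E] [FiniteDimensional ℝ E]

theorem continuous_of_finiteDimensional (q : QuadraticForm ℝ E) : Continuous q := by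
  have hq : ⇑q = fun x => (associated q).toContinuousBilinearMap x x :=
    funext fun x => (associated_eq_self_apply ℝ q x).symm
  rw [hq]
  exact (ContinuousLinearMap.continuous _).clm_apply continuous_id

theorem exists_pos_mul_le_of_pos (q p : QuadraticForm ℝ E) {V : Submodule ℝ E}
    (hV : ∀ x ∈ V, x ≠ 0 → 0 < q x) : ∃ c > 0, ∀ x ∈ V, c * p x ≤ q x := by
  have hS : IsCompact ((V : Set E) ∩ Metric.sphere 0 1) :=
    (isCompact_sphere 0 1).inter_left V.closed_of_finiteDimensional
  obtain ⟨c, hc, hcS⟩ := hS.exists_pos_mul_le q.continuous_of_finiteDimensional.continuousOn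
    p.continuous_of_finiteDimensional.continuousOn fun u hu =>
      hV u hu.1 (ne_zero_of_mem_sphere one_ne_zero ⟨u, hu.2⟩)
  refine ⟨c, hc, fun x hx => ?_⟩
  rcases eq_or_ne x 0 with rfl | hx0
  · simp
  -- both sides are homogeneous of degree two, so it suffices to compare them on `x / ‖x‖`
  have hu := hcS (‖x‖⁻¹ • x) ⟨V.smul_mem _ hx, by simp [norm_smul, hx0]⟩
  rw [QuadraticMap.map_smul, QuadraticMap.map_smul, smul_eq_mul, smul_eq_mul, mul_left_comm] at hu
  exact le_of_mul_le_mul_left hu (by positivity)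

end Normed

end QuadraticForm

section Inertia

variable {N : ℕ} (q : QuadraticForm ℝ (Fin N → ℝ))

theorem bddAbove_finrank_of_pos :
    BddAbove {d : ℕ | ∃ W : Submodule ℝ (Fin N → ℝ),
      finrank ℝ W = d ∧ ∀ x ∈ W, x ≠ 0 → 0 < q x} :=
  ⟨N, by rintro _ ⟨W, rfl, -⟩; simpa using W.finrank_le⟩

theorem le_posInertia {W : Submodule ℝ (Fin N → ℝ)} (hW : ∀ x ∈ W, x ≠ 0 → 0 < q x) :
    finrank ℝ W ≤ posInertia q :=
  le_csSup (bddAbove_finrank_of_pos q) ⟨W, rfl, hW⟩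

theorem exists_finrank_eq_posInertia :
    ∃ W : Submodule ℝ (Fin N → ℝ), finrank ℝ W = posInertia q ∧ ∀ x ∈ W, x ≠ 0 → 0 < q x := by
  refine Nat.sSup_mem ?_ (bddAbove_finrank_of_pos q)
  exact ⟨0, ⊥, finrank_bot ℝ _, fun _ hx hx0 => absurd ((mem_bot ℝ).1 hx) hx0⟩

theorem posInertia_eq_of_finrank_add_eq {W U : Submodule ℝ (Fin N → ℝ)}
    (hW : ∀ x ∈ W, x ≠ 0 → 0 < q x) (hU : ∀ x ∈ U, q x ≤ 0)
    (hdim : finrank ℝ W + finrank ℝ U = N) : posInertia q = finrank ℝ W := by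
  refine le_antisymm ?_ (le_posInertia q hW)
  obtain ⟨W', hW'dim, hW'⟩ := exists_finrank_eq_posInertia q
  have := finrank_add_finrank_le_of_disjoint (q.disjoint_of_pos_of_nonpos hW' hU)
  rw [finrank_fin_fun] at this
  omega

theorem negInertia_eq_of_finrank_add_eq {W U : Submodule ℝ (Fin N → ℝ)}
    (hW : ∀ x ∈ W, x ≠ 0 → q x < 0) (hU : ∀ x ∈ U, 0 ≤ q x)
    (hdim : finrank ℝ W + finrank ℝ U = N) : negInertia q = finrank ℝ W :=
  posInertia_eq_of_finrank_add_eq (-q) (by simpa using hW) (by simpa using hU) hdim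

end Inertia

/-- For `q` a real quadratic form and `p` positive definite, for all sufficiently small
`ε > 0` one has `i⁻(q − εp) = i⁻(q) + dim ker(q)`, where `ker(q)` is the kernel of the
symmetric bilinear form associated to `q`. -/
theorem negInertia_sub_smul_posDef (n : ℕ)
    (q p : QuadraticForm ℝ (Fin (n + 1) → ℝ)) (hp : ∀ x, x ≠ 0 → 0 < p x) :
    ∃ ε₀ > (0 : ℝ), ∀ ε : ℝ, 0 < ε → ε < ε₀ →
      negInertia (q - ε • p)
        = negInertia q
          + Module.finrank ℝ (LinearMap.ker (QuadraticMap.associated (R := ℝ) q)) := by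
  obtain ⟨Vp, Vn, hVp, hVn, hdim⟩ := q.exists_finrank_add_finrank_add_finrank_ker
  rw [finrank_fin_fun] at hdim
  have hVpK := q.finrank_sup_ker fun x hx hx0 => (hVp x hx hx0).ne'
  have hVnK := q.finrank_sup_ker fun x hx hx0 => (hVn x hx hx0).ne
  obtain ⟨c, hc, hcp⟩ := q.exists_pos_mul_le_of_pos p hVp
  refine ⟨c, hc, fun ε hε hεc => ?_⟩
  have hqε : ∀ x, (q - ε • p) x = q x - ε * p x := fun _ => rfl
  rw [negInertia_eq_of_finrank_add_eq q hVn (fun _ => q.nonneg_of_mem_sup_ker hVp) (by omega),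
    negInertia_eq_of_finrank_add_eq (q - ε • p) (W := Vn ⊔ ker (associated q)) (U := Vp) ?_ ?_
      (by omega), hVnK]
  · intro x hx hx0
    have hqx : q x ≤ 0 := by
      simpa using (-q).nonneg_of_mem_sup_ker (fun y hy hy0 => by simpa using hVn y hy hy0)
        (by simpa using hx)
    rw [hqε]
    exact sub_neg.2 (hqx.trans_lt (mul_pos hε (hp x hx0)))
  · intro x hx
    have hpx : 0 ≤ p x := by
      rcases eq_or_ne x 0 with rfl | hx0
      · simp
      · exact (hp x hx0).le
    rw [hqε, sub_nonneg]
    exact (mul_le_mul_of_nonneg_right hεc.le hpx).trans (hcp x hx)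
end

section
/- Let q₀, …, q_k be real quadratic forms on ℝ^{n+1} with common zero locus X in ℝPⁿ, and let B = {(ω, [x]) ∈ S^k × ℝPⁿ : (ωq)(x) > 0} with second-factor projection p₂ : B → ℝPⁿ. Then the image of p₂ is ℝPⁿ ∖ X, the fiber p₂^{-1}([x]) over each [x] in the image is contractible (it is an open hemisphere of S^k), and p₂ : B → ℝPⁿ ∖ X is a homotopy equivalence. -/
open Matrix

theorem QuadraticForm.continuous {ι : Type*} [Fintype ι] [DecidableEq ι]
    (Q : QuadraticForm ℝ (ι → ℝ)) : Continuous Q := by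
  have hQ : ⇑Q = fun x => x ⬝ᵥ Q.toMatrix' *ᵥ x := by
    funext x
    rw [← QuadraticMap.associated_eq_self_apply ℝ Q x, QuadraticForm.toMatrix',
      ← Matrix.toLinearMap₂'_apply', Matrix.toLinearMap₂'_toMatrix']
  rw [hQ]
  fun_prop

section NormalizeVec

variable {ι : Type*} [Fintype ι]

noncomputable def normalizeVec (w : ι → ℝ) : ι → ℝ := (√(w ⬝ᵥ w))⁻¹ • w

lemma dotProduct_self_pos {w : ι → ℝ} (hw : w ≠ 0) : 0 < w ⬝ᵥ w :=
  (dotProduct_self_star_nonneg w).lt_of_ne' (dotProduct_self_eq_zero.not.mpr hw)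

lemma ne_zero_of_dotProduct_pos {w c : ι → ℝ} (h : 0 < w ⬝ᵥ c) : w ≠ 0 := by
  rintro rfl
  simp at h

lemma normalizeVec_dotProduct_self {w : ι → ℝ} (hw : w ≠ 0) :
    normalizeVec w ⬝ᵥ normalizeVec w = 1 := by
  have h := dotProduct_self_pos hw
  rw [normalizeVec, smul_dotProduct, dotProduct_smul, smul_eq_mul, smul_eq_mul, ← mul_assoc,
    ← mul_inv, Real.mul_self_sqrt h.le, inv_mul_cancel₀ h.ne']

lemma normalizeVec_of_dotProduct_self {w : ι → ℝ} (hw : w ⬝ᵥ w = 1) : normalizeVec w = w := by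
  simp [normalizeVec, hw]

lemma normalizeVec_smul_of_pos {a : ℝ} (ha : 0 < a) (w : ι → ℝ) :
    normalizeVec (a • w) = normalizeVec w := by
  rw [normalizeVec, normalizeVec, smul_dotProduct, dotProduct_smul, smul_eq_mul, smul_eq_mul,
    ← mul_assoc, Real.sqrt_mul (mul_self_nonneg a), Real.sqrt_mul_self ha.le, mul_inv, smul_smul]
  field_simp

lemma normalizeVec_dotProduct_pos {w c : ι → ℝ} (h : 0 < w ⬝ᵥ c) :
    0 < normalizeVec w ⬝ᵥ c := by
  rw [normalizeVec, smul_dotProduct, smul_eq_mul]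
  exact mul_pos (inv_pos.mpr (Real.sqrt_pos.mpr
    (dotProduct_self_pos (ne_zero_of_dotProduct_pos h)))) h

lemma continuousOn_normalizeVec : ContinuousOn (normalizeVec (ι := ι)) {w | w ≠ 0} := by
  refine ContinuousOn.smul (ContinuousOn.inv₀ (f := fun w : ι → ℝ => √(w ⬝ᵥ w)) (by fun_prop)
    fun w hw => ?_) continuousOn_id
  exact (Real.sqrt_pos.mpr (dotProduct_self_pos hw)).ne'

lemma segment_dotProduct_pos {u ω c : ι → ℝ} (hu : 0 < u ⬝ᵥ c) (hω : 0 < ω ⬝ᵥ c)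
    (t : unitInterval) : 0 < ((1 - (t : ℝ)) • u + (t : ℝ) • ω) ⬝ᵥ c :=
  have hconvex : Convex ℝ {w : ι → ℝ | 0 < w ⬝ᵥ c} :=
    convex_halfSpace_gt ⟨(add_dotProduct · · c), (smul_dotProduct · · c)⟩ 0
  hconvex hu hω (sub_nonneg.mpr t.2.2) t.2.1 (sub_add_cancel 1 _)

end NormalizeVec

/-- Rescaling a representative by `a` rescales `F` by `a * a > 0`, which `normalizeVec`
forgets; so the map lifts to the open set `{v ≠ 0 | F v ≠ 0}`, where it is continuous. -/
theorem Projectivization.continuous_normalizeVec_comp_rep {V ι : Type*} [AddCommGroup V]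
    [Module ℝ V] [TopologicalSpace V] [Fintype ι] {F : V → ι → ℝ} (hF : Continuous F)
    (hF_smul : ∀ (a : ℝ) v, F (a • v) = (a * a) • F v) :
    Continuous fun P : Function.support (fun P : Projectivization ℝ V => F P.rep) =>
      normalizeVec (F P.val.rep) := by
  have hπ : Topology.IsQuotientMap (mk' ℝ (V := V)) := isQuotientMap_quotient_mk'
  have hrep (v : {v : V // v ≠ 0}) : ∃ r : ℝ, 0 < r ∧ F (mk' ℝ v).rep = r • F v := by
    obtain ⟨a, ha⟩ := exists_smul_eq_mk_rep ℝ v.val v.2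
    exact ⟨a * a, mul_self_pos.mpr a.ne_zero, by rw [mk'_eq_mk, ← ha, Units.smul_def, hF_smul]⟩
  have hpreimage : mk' ℝ ⁻¹' Function.support (fun P : Projectivization ℝ V => F P.rep)
      = {v | F v.val ≠ 0} := by
    ext v
    obtain ⟨r, hr, hv⟩ := hrep v
    exact (congrArg (· ≠ 0) hv).to_iff.trans (smul_ne_zero_iff_right hr.ne')
  have hopen : IsOpen (Function.support (fun P : Projectivization ℝ V => F P.rep)) := by
    rw [← hπ.isOpen_preimage, hpreimage]
    exact isOpen_ne_fun (hF.comp continuous_subtype_val) continuous_const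
  rw [(hπ.restrictPreimage_isOpen hopen).continuous_iff]
  have hlift : (fun P : Function.support (fun P : Projectivization ℝ V => F P.rep) =>
      normalizeVec (F P.val.rep)) ∘ (Function.support _).restrictPreimage (mk' ℝ)
      = fun v => normalizeVec (F v.val.val) := by
    funext v
    obtain ⟨r, hr, hv⟩ := hrep v.val
    exact (congrArg normalizeVec hv).trans (normalizeVec_smul_of_pos hr _)
  rw [hlift]
  refine continuousOn_normalizeVec.comp_continuous (by fun_prop) fun v => ?_
  simpa [hpreimage] using v.2

namespace unitSphere

variable {k : ℕ}

lemma mem_iff_dotProduct_self {ω : Fin (k + 1) → ℝ} : ω ∈ unitSphere k ↔ ω ⬝ᵥ ω = 1 := by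
  simp [unitSphere, dotProduct, sq]

lemma normalizeVec_mem {w : Fin (k + 1) → ℝ} (hw : w ≠ 0) : normalizeVec w ∈ unitSphere k :=
  mem_iff_dotProduct_self.mpr (normalizeVec_dotProduct_self hw)

lemma normalizeVec_of_mem {ω : Fin (k + 1) → ℝ} (hω : ω ∈ unitSphere k) : normalizeVec ω = ω :=
  normalizeVec_of_dotProduct_self (mem_iff_dotProduct_self.mp hω)

variable {Y : Type*} (c : Y → Fin (k + 1) → ℝ)

theorem range_snd_eq_support :
    Set.range (fun b : {b : unitSphere k × Y // 0 < b.1.val ⬝ᵥ c b.2} => b.val.2)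
      = Function.support c := by
  ext y
  refine ⟨?_, fun hy => ?_⟩
  · rintro ⟨⟨⟨ω, y⟩, hb⟩, rfl⟩ hy
    simp [hy] at hb
  · exact ⟨⟨(⟨normalizeVec (c y), normalizeVec_mem hy⟩, y),
      normalizeVec_dotProduct_pos (dotProduct_self_pos hy)⟩, rfl⟩

theorem exists_homotopyEquiv_snd [TopologicalSpace Y]
    (hc : Continuous fun y : Function.support c => normalizeVec (c y)) :
    ∃ h : ContinuousMap.HomotopyEquiv {b : unitSphere k × Y // 0 < b.1.val ⬝ᵥ c b.2}
      (Function.support c), ∀ b, (h.toFun b).val = b.val.2 := by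
  let p : C({b : unitSphere k × Y // 0 < b.1.val ⬝ᵥ c b.2}, Function.support c) :=
    ⟨fun b => ⟨b.val.2, fun h => by simpa [h] using b.2⟩, by fun_prop⟩
  let u (y : Function.support c) : Fin (k + 1) → ℝ := normalizeVec (c y)
  have hu (y : Function.support c) : 0 < u y ⬝ᵥ c y :=
    normalizeVec_dotProduct_pos (dotProduct_self_pos y.2)
  let s : C(Function.support c, {b : unitSphere k × Y // 0 < b.1.val ⬝ᵥ c b.2}) :=
    ⟨fun y => ⟨(⟨u y, normalizeVec_mem y.2⟩, y), hu y⟩,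
      ((hc.subtype_mk _).prodMk continuous_subtype_val).subtype_mk _⟩
  let H : (s.comp p).Homotopy (ContinuousMap.id _) :=
    { toFun := fun tb =>
        have hpos := segment_dotProduct_pos (hu (p tb.2)) tb.2.2 tb.1
        ⟨(⟨normalizeVec _, normalizeVec_mem (ne_zero_of_dotProduct_pos hpos)⟩, tb.2.val.2),
          normalizeVec_dotProduct_pos hpos⟩
      continuous_toFun := by
        refine Continuous.subtype_mk (Continuous.prodMk (Continuous.subtype_mk ?_ _)
          (by fun_prop)) _
        refine continuousOn_normalizeVec.comp_continuous ?_ fun tb =>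
          ne_zero_of_dotProduct_pos (segment_dotProduct_pos (hu (p tb.2)) tb.2.2 tb.1)
        have : Continuous fun tb : unitInterval × _ => u (p tb.2) :=
          hc.comp (p.continuous.comp continuous_snd)
        fun_prop
      map_zero_left := fun b => Subtype.ext <| Prod.ext (Subtype.ext <| by
        simp only [Set.Icc.coe_zero, sub_zero, one_smul, zero_smul, add_zero]
        exact normalizeVec_of_mem (s (p b)).val.1.2) rfl
      map_one_left := fun b => Subtype.ext <| Prod.ext (Subtype.ext <| by
        simp only [Set.Icc.coe_one, sub_self, zero_smul, one_smul, zero_add]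
        exact normalizeVec_of_mem b.val.1.2) rfl }
  exact ⟨⟨p, s, ⟨H⟩, ⟨.refl _⟩⟩, fun _ => rfl⟩

theorem contractibleSpace_hemisphere {c : Fin (k + 1) → ℝ} (hc : c ≠ 0) :
    ContractibleSpace {ω ∈ unitSphere k | 0 < ω ⬝ᵥ c} := by
  obtain ⟨h, -⟩ := exists_homotopyEquiv_snd (fun _ : Unit => c) continuous_of_discreteTopology
  have : Nonempty (Function.support fun _ : Unit => c) := ⟨⟨(), hc⟩⟩
  have := h.contractibleSpace
  let e : {ω ∈ unitSphere k | 0 < ω ⬝ᵥ c} ≃ₜ {b : unitSphere k × Unit // 0 < b.1.val ⬝ᵥ c} :=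
    { toFun ω := ⟨(⟨ω, ω.2.1⟩, ()), ω.2.2⟩
      invFun b := ⟨b.val.1, b.val.1.2, b.2⟩
      continuous_toFun := by fun_prop
      continuous_invFun := by fun_prop }
  exact e.contractibleSpace

end unitSphere

/-- Let `B = {(ω, [x]) ∈ S^k × ℝPⁿ : (ωq)(x) > 0}` with second projection
`p₂(ω, [x]) = [x]`.  Then: the image of `p₂` is `ℝPⁿ ∖ X`, each fiber of `p₂` over a point
of the image is contractible, and `p₂ : B → ℝPⁿ ∖ X` is a homotopy equivalence. -/
theorem second_projection_homotopy_equivalence (n k : ℕ)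
    (q : Fin (k + 1) → QuadraticForm ℝ (Fin (n + 1) → ℝ)) :
    (Set.range (fun b : {b : unitSphere k × Projectivization ℝ (Fin (n + 1) → ℝ) //
          0 < (∑ i, (b.1.val : Fin (k + 1) → ℝ) i • q i) b.2.rep} => b.val.2)
        = {P : Projectivization ℝ (Fin (n + 1) → ℝ) | ¬ ∀ i, q i P.rep = 0}) ∧
    (∀ P : Projectivization ℝ (Fin (n + 1) → ℝ), ¬ (∀ i, q i P.rep = 0) →
      ContractibleSpace {ω ∈ unitSphere k | 0 < (∑ i, ω i • q i) P.rep}) ∧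
    (∃ h : ContinuousMap.HomotopyEquiv
        {b : unitSphere k × Projectivization ℝ (Fin (n + 1) → ℝ) //
          0 < (∑ i, (b.1.val : Fin (k + 1) → ℝ) i • q i) b.2.rep}
        {P : Projectivization ℝ (Fin (n + 1) → ℝ) | ¬ ∀ i, q i P.rep = 0},
      ∀ b, (h.toFun b).val = b.val.2) := by
  let F (x : Fin (n + 1) → ℝ) : Fin (k + 1) → ℝ := fun i => q i x
  let c (P : Projectivization ℝ (Fin (n + 1) → ℝ)) : Fin (k + 1) → ℝ := F P.rep
  have hpencil (ω : Fin (k + 1) → ℝ) (x) : (∑ i, ω i • q i) x = ω ⬝ᵥ F x := by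
    simp [dotProduct, F]
  have hbundle : (fun b : unitSphere k × Projectivization ℝ (Fin (n + 1) → ℝ) =>
      0 < (∑ i, (b.1.val : Fin (k + 1) → ℝ) i • q i) b.2.rep)
      = fun b => 0 < b.1.val ⬝ᵥ c b.2 := by
    simp only [hpencil, c]
  have hsupport : {P | ¬ ∀ i, q i P.rep = 0} = Function.support c := by
    ext P
    exact (not_congr funext_iff).symm
  have hcont : Continuous fun P : Function.support c => normalizeVec (c P) :=
    Projectivization.continuous_normalizeVec_comp_rep (continuous_pi fun i => (q i).continuous)
      fun a x => funext fun i => (q i).map_smul a x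
  rw [hbundle, hsupport]
  refine ⟨unitSphere.range_snd_eq_support c, fun P hP => ?_,
    unitSphere.exists_homotopyEquiv_snd c hcont⟩
  have hfibre : {ω ∈ unitSphere k | 0 < (∑ i, ω i • q i) P.rep}
      = {ω ∈ unitSphere k | 0 < ω ⬝ᵥ c P} := by
    simp only [hpencil, c]
  rw [hfibre]
  exact unitSphere.contractibleSpace_hemisphere fun h => hP (congrFun h)
end

section
/- Let Q be a real symmetric (n+1)×(n+1) matrix and write det(Q − tI) = a₀ + a₁t + ⋯ + a_n tⁿ + (−1)^{n+1} t^{n+1}. Then the number of positive eigenvalues of Q, counted with multiplicity, equals the number of sign changes in the sequence (a₀, a₁, …, a_n, (−1)^{n+1}) after deleting its zero entries. -/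
/-- Number of sign changes of a finite sequence of reals: delete the zero entries, then
count the indices where consecutive entries have opposite signs. -/
noncomputable def signChanges (l : List ℝ) : ℕ :=
  let l' := l.filter (fun x => decide (x ≠ 0))
  (l'.zip l'.tail).countP (fun p => decide (p.1 * p.2 < 0))

/-- The characteristic polynomial in the form `det(Q − tI)`. -/
noncomputable def detSub {n : ℕ} (Q : Matrix (Fin (n + 1)) (Fin (n + 1)) ℝ) :
    Polynomial ℝ :=
  Matrix.det (Q.map Polynomial.C - (Polynomial.X : Polynomial ℝ) • 1)

/-!
A real symmetric matrix has real eigenvalues, so its characteristic polynomial `P` splits over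
`ℝ`, and for split polynomials Descartes' bound is an equality. The bound applied to `P(x)` and
to `P(-x)` gives at least as many sign changes as positive, resp. negative, roots. Conversely,
two consecutive nonzero coefficients at distance `k` produce a sign change in at most `min 2 k`
of the two coefficient sequences (for `k = 1` in exactly one), so the two sign-change counts add
up to at most `natDegree P - natTrailingDegree P`, the number of nonzero roots.
-/

open Polynomial

theorem List.zip_tail_reverse {α : Type*} (l : List α) :
    l.reverse.zip l.reverse.tail = ((l.zip l.tail).map Prod.swap).reverse := by
  apply List.ext_getElem
  · simp
  · intro i h1 h2
    simp only [List.length_zip, List.length_reverse, List.length_tail] at h1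
    simp only [List.getElem_zip, List.getElem_reverse, List.getElem_tail, List.getElem_map,
      Prod.swap_prod_mk, List.length_zip, List.length_tail, List.length_map, Prod.mk.injEq]
    constructor <;> congr 1 <;> omega

theorem Multiset.card_eq_countP_pos_add_countP_neg_add_count_zero {α : Type*}
    [LinearOrder α] [Zero α] (s : Multiset α) :
    s.card = s.countP (0 < ·) + s.countP (· < 0) + s.count 0 := by
  induction s using Multiset.induction_on with
  | empty => simp
  | cons a s ih =>
    rcases lt_trichotomy a 0 with h | rfl | h
    · simp [h, h.not_gt, h.ne', ih]; omega
    · simp [ih]; omega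
    · simp [h, h.not_gt, h.ne, ih]; omega

section Sign

variable {R : Type*} [Ring R] [LinearOrder R] [IsStrictOrderedRing R]

theorem mul_neg_iff_sign_ne {a b : R} (ha : a ≠ 0) (hb : b ≠ 0) :
    a * b < 0 ↔ SignType.sign a ≠ SignType.sign b := by
  rcases ha.lt_or_gt with ha | ha <;> rcases hb.lt_or_gt with hb | hb <;>
    simp [ha, hb, mul_neg_of_neg_of_pos, mul_neg_of_pos_of_neg, mul_pos_of_neg_of_neg, le_of_lt]

theorem countP_zip_tail_mul_neg_eq_length_destutter_sub_one :
    ∀ l : List R, (∀ x ∈ l, x ≠ 0) →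
      (l.zip l.tail).countP (fun p => decide (p.1 * p.2 < 0)) =
        ((l.map SignType.sign).destutter (· ≠ ·)).length - 1
  | [], _ => rfl
  | [_], _ => rfl
  | a :: b :: l, hl => by
    have ih := countP_zip_tail_mul_neg_eq_length_destutter_sub_one (b :: l)
      fun x hx => hl x (List.mem_cons_of_mem a hx)
    simp only [List.map_cons, List.destutter_cons', List.destutter'_cons, List.tail_cons] at ih ⊢
    rw [List.zip_cons_cons, List.countP_cons, ih]
    simp only [mul_neg_iff_sign_ne (hl a (by simp)) (hl b (by simp))]
    by_cases h : SignType.sign a = SignType.sign b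
    · simp [h]
    · simp only [h, ne_eq, not_false_eq_true, decide_true, ↓reduceIte, List.length_cons,
        Nat.add_sub_cancel]
      exact Nat.sub_add_cancel (List.length_pos_of_ne_nil (List.destutter'_ne_nil _ _))

theorem not_sign_eq_neg_and_sign_neg_one_pow_eq_neg {a b : R} (hb : b ≠ 0) (m : ℕ) :
    ¬ (SignType.sign a = -SignType.sign b ∧
      SignType.sign ((-1) ^ (m + 1) * a) = -SignType.sign ((-1) ^ m * b)) := by
  rintro ⟨h1, h2⟩
  simp only [sign_mul, sign_pow, Left.sign_neg, sign_one, pow_succ, h1] at h2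
  have : SignType.sign b = 0 := by
    rcases neg_one_pow_eq_or SignType m with h | h <;> rw [h] at h2 <;>
      revert h2 <;> cases SignType.sign b <;> decide
  exact hb (sign_eq_zero_iff.mp this)

end Sign

theorem signChanges_eq_length_destutter_sub_one (l : List ℝ) :
    signChanges l =
      (((l.map SignType.sign).filter (· ≠ 0)).destutter (· ≠ ·)).length - 1 := by
  rw [signChanges, countP_zip_tail_mul_neg_eq_length_destutter_sub_one _ (by simp),
    List.filter_map]
  simp [Function.comp_def]

theorem signChanges_reverse (l : List ℝ) : signChanges l.reverse = signChanges l := by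
  rw [signChanges, signChanges, List.filter_reverse, List.zip_tail_reverse, List.countP_reverse,
    List.countP_map]
  simp [Function.comp_def, mul_comm]

namespace Polynomial

theorem reverse_coeffList {R : Type*} [Semiring R] {P : R[X]} (hP : P ≠ 0) {n : ℕ}
    (hn : P.natDegree = n) :
    P.coeffList.reverse = List.ofFn fun i : Fin (n + 1) => P.coeff i := by
  subst hn
  rw [coeffList, withBotSucc_degree_eq_natDegree_add_one hP, List.map_reverse,
    List.reverse_reverse, List.ofFn_eq_map]
  exact List.ext_getElem (by simp) (by simp)

theorem signVariations_eq_signChanges (P : ℝ[X]) :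
    signVariations P = signChanges P.coeffList := by
  rw [signChanges_eq_length_destutter_sub_one, signVariations]

theorem natTrailingDegree_eraseLead {R : Type*} [Semiring R] {P : R[X]} (hE : P.eraseLead ≠ 0) :
    P.eraseLead.natTrailingDegree = P.natTrailingDegree := by
  have hcoeff {i : ℕ} (hi : P.eraseLead.coeff i ≠ 0) : P.coeff i = P.eraseLead.coeff i :=
    (eraseLead_coeff_of_ne i fun h => hi (h ▸ eraseLead_coeff_natDegree)).symm
  have htrail : P.eraseLead.trailingCoeff ≠ 0 := mt trailingCoeff_eq_zero.mp hE
  have hle : P.natTrailingDegree ≤ P.eraseLead.natTrailingDegree :=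
    natTrailingDegree_le_of_ne_zero <| by rwa [hcoeff htrail]
  have hlt : P.natTrailingDegree < P.natDegree := by
    have := (eraseLead_natDegree_lt_or_eraseLead_eq_zero P).resolve_right hE
    have := natTrailingDegree_le_natDegree P.eraseLead
    omega
  refine le_antisymm (natTrailingDegree_le_of_ne_zero ?_) hle
  rw [eraseLead_coeff_of_ne _ hlt.ne]
  exact mt trailingCoeff_eq_zero.mp (by rintro rfl; simp at hE)

section CommRing

variable {R : Type*} [CommRing R]

theorem coeff_comp_neg_X (P : R[X]) (n : ℕ) : (P.comp (-X)).coeff n = (-1) ^ n * P.coeff n := by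
  rw [← neg_one_mul (X : R[X]), ← C_1, ← C_neg, comp_C_mul_X_coeff, mul_comm]

theorem natDegree_comp_neg_X [Nontrivial R] (P : R[X]) :
    (P.comp (-X)).natDegree = P.natDegree :=
  natDegree_eq_of_degree_eq degree_comp_neg_X

theorem eraseLead_comp_neg_X [Nontrivial R] (P : R[X]) :
    (P.comp (-X)).eraseLead = P.eraseLead.comp (-X) := by
  ext n
  simp only [eraseLead_coeff, coeff_comp_neg_X, natDegree_comp_neg_X]
  split_ifs <;> simp

end CommRing

variable {R : Type*} [CommRing R] [LinearOrder R] [IsStrictOrderedRing R]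

theorem signVariations_add_signVariations_comp_neg_X_le (P : R[X]) :
    signVariations P + signVariations (P.comp (-X)) ≤ P.natDegree - P.natTrailingDegree := by
  induction hc : P.support.card generalizing P with
  | zero => simp [card_support_eq_zero.mp hc]
  | succ c ih =>
    have hP : P ≠ 0 := by rintro rfl; simp at hc
    have hP' : P.comp (-X) ≠ 0 := by simpa using hP
    have hE := ih P.eraseLead (card_support_eraseLead' hc)
    rw [signVariations_eq_eraseLead_add_ite hP, signVariations_eq_eraseLead_add_ite hP',
      eraseLead_comp_neg_X, comp_neg_X_leadingCoeff_eq, comp_neg_X_leadingCoeff_eq]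
    rcases eq_or_ne P.eraseLead 0 with h0 | h0
    · simp [h0, hP]
    have hlt := (eraseLead_natDegree_lt_or_eraseLead_eq_zero P).resolve_right h0
    have hle := natTrailingDegree_le_natDegree P.eraseLead
    rw [natTrailingDegree_eraseLead h0] at hE hle
    obtain h1 | h2 : P.natDegree = P.eraseLead.natDegree + 1 ∨
        P.eraseLead.natDegree + 2 ≤ P.natDegree := by omega
    · have := not_sign_eq_neg_and_sign_neg_one_pow_eq_neg (a := P.leadingCoeff)
        (mt leadingCoeff_eq_zero.mp h0) P.eraseLead.natDegree
      rw [← h1] at this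
      split_ifs with hsign hsign'
      · exact absurd ⟨hsign, hsign'⟩ this
      all_goals omega
    · split_ifs <;> omega

theorem Splits.roots_countP_pos_eq_signVariations {P : R[X]} (hP : P.Splits) :
    P.roots.countP (0 < ·) = signVariations P := by
  have hpos := roots_countP_pos_le_signVariations P
  have hneg := roots_countP_pos_le_signVariations (P.comp (-X))
  rw [roots_comp_neg_X, Multiset.countP_map] at hneg
  simp only [neg_pos, ← Multiset.countP_eq_card_filter] at hneg
  have hbound := signVariations_add_signVariations_comp_neg_X_le P
  have hcard := P.roots.card_eq_countP_pos_add_countP_neg_add_count_zero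
  rw [← hP.natDegree_eq_card_roots, count_roots, rootMultiplicity_eq_natTrailingDegree'] at hcard
  have := natTrailingDegree_le_natDegree P
  omega

end Polynomial

theorem detSub_eq_C_mul_charpoly {n : ℕ} (Q : Matrix (Fin (n + 1)) (Fin (n + 1)) ℝ) :
    detSub Q = C ((-1) ^ (n + 1)) * Q.charpoly := by
  have h : Q.map C - (X : ℝ[X]) • 1 = -Q.charmatrix := by
    rw [Matrix.charmatrix, neg_sub, Matrix.smul_one_eq_diagonal, ← Matrix.scalar_apply]
    rfl
  rw [detSub, Matrix.charpoly, h, Matrix.det_neg, Fintype.card_fin, map_pow, map_neg, map_one]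

theorem natDegree_detSub {n : ℕ} (Q : Matrix (Fin (n + 1)) (Fin (n + 1)) ℝ) :
    (detSub Q).natDegree = n + 1 := by
  rw [detSub_eq_C_mul_charpoly, natDegree_C_mul (by simp), Matrix.charpoly_natDegree_eq_dim,
    Fintype.card_fin]

/-- Descartes' rule for symmetric matrices: writing
`det(Q − tI) = a₀ + a₁ t + ⋯ + aₙ tⁿ + (−1)^{n+1} t^{n+1}`, the number of positive
eigenvalues of a real symmetric matrix `Q`, counted with multiplicity (i.e. the number of
positive roots of its characteristic polynomial counted with multiplicity), equals the
number of sign changes of the sequence `(a₀, …, aₙ, (−1)^{n+1})`. -/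
theorem descartes_rule_symmetric (n : ℕ) (Q : Matrix (Fin (n + 1)) (Fin (n + 1)) ℝ)
    (hQ : Q.IsSymm) :
    (Q.charpoly.roots.filter fun x => 0 < x).card
      = signChanges (List.ofFn fun i : Fin (n + 2) => (detSub Q).coeff i) := by
  have hsplits : Q.charpoly.Splits :=
    (Matrix.isHermitian_iff_isSymm.mpr hQ).splits_charpoly
  have hne : detSub Q ≠ 0 := ne_zero_of_natDegree_gt (natDegree_detSub Q).symm.le
  rw [← Multiset.countP_eq_card_filter, hsplits.roots_countP_pos_eq_signVariations,
    ← signVariations_C_mul _ (by simp : ((-1 : ℝ) ^ (n + 1)) ≠ 0),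
    ← detSub_eq_C_mul_charpoly,
    signVariations_eq_signChanges, ← signChanges_reverse,
    reverse_coeffList hne (natDegree_detSub Q)]
end
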